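/- (Modified K-means (K-medians-type) centroid consistency.) Suppose centroids β₁,…,β_K ∈ ℝ^K with min_{k≠k'}‖β_k − β_{k'}‖ ≥ c₁ > 0, points β̂₁,…,β̂ₙ with labels gᵢ and sup_i ‖β̂ᵢ − β_{gᵢ}‖ ≤ c₂, proportions π_k ≥ c/K, and 15Kc₂ ≤ c·c₁. Let à minimize Q̃(𝒜) = n⁻¹ Σᵢ min_l ‖β̂ᵢ − α_l‖ (unsquared Euclidean distances). Then the Hausdorff distance between à and {β₁,…,β_K} is at most 3Kc₂/c. -/

import Mathlib

open scoped BigOperators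

/-- The modified (K-medians-type) objective `Q̃(α) = n⁻¹ Σᵢ min_l ‖β̂ᵢ − α_l‖`. -/
noncomputable def kmedObj {n K : ℕ} (hK : 0 < K)
    (βhat : Fin n → EuclideanSpace ℝ (Fin K))
    (α : Fin K → EuclideanSpace ℝ (Fin K)) : ℝ :=
  (n : ℝ)⁻¹ * ∑ i, Finset.univ.inf' (Finset.univ_nonempty_iff.mpr ⟨⟨0, hK⟩⟩)
    (fun l => ‖βhat i - α l‖)

/-! The optimal value is at most `c₂`, so every well-populated cluster must have a centre of
`α̃` within `3Kc₂/c` of its true centroid: otherwise that cluster alone would cost more than `c₂`.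
Since the true centroids are more than twice that radius apart, distinct centroids get distinct
nearby centres, so the assignment is a bijection of `Fin K` and both directions of the Hausdorff
bound follow. -/

open Finset Metric Set

section PseudoMetricSpace

variable {X ι : Type*} [PseudoMetricSpace X] {β : ι → X} {r : ℝ}

theorem Function.injective_of_dist_le_of_two_mul_lt_dist {ι' : Type*} {α : ι' → X} {f : ι → ι'}
    (hsep : ∀ k k', k ≠ k' → 2 * r < dist (β k) (β k'))
    (hf : ∀ k, dist (α (f k)) (β k) ≤ r) : Function.Injective f := by
  intro k k' hkk'
  by_contra hne
  have hk' := hf k'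
  rw [← hkk'] at hk'
  have := (dist_triangle_left (β k) (β k') (α (f k))).trans (by linarith [hf k] : _ ≤ 2 * r)
  exact (hsep k k' hne).not_ge this

theorem hausdorffDist_range_le_of_forall_exists_dist_le [Finite ι] {α : ι → X} (hr : 0 ≤ r)
    (hsep : ∀ k k', k ≠ k' → 2 * r < dist (β k) (β k'))
    (hnear : ∀ k, ∃ l, dist (α l) (β k) ≤ r) :
    hausdorffDist (range α) (range β) ≤ r := by
  choose f hf using hnear
  have hsurj : Function.Surjective f :=
    Finite.injective_iff_surjective.mp (Function.injective_of_dist_le_of_two_mul_lt_dist hsep hf)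
  apply hausdorffDist_le_of_mem_dist hr
  · rintro _ ⟨l, rfl⟩
    obtain ⟨k, rfl⟩ := hsurj l
    exact ⟨β k, mem_range_self k, hf k⟩
  · rintro _ ⟨k, rfl⟩
    exact ⟨α (f k), mem_range_self _, by rw [dist_comm]; exact hf k⟩

end PseudoMetricSpace

section KMedians

variable {n K : ℕ} (hK : 0 < K) (βhat : Fin n → EuclideanSpace ℝ (Fin K))
  (α : Fin K → EuclideanSpace ℝ (Fin K))

theorem kmedObj_le_of_forall_norm_sub_le (g : Fin n → Fin K) {d : ℝ} (hd : 0 ≤ d)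
    (h : ∀ i, ‖βhat i - α (g i)‖ ≤ d) : kmedObj hK βhat α ≤ d := by
  have hsum : ∑ i, univ.inf' (univ_nonempty_iff.mpr ⟨⟨0, hK⟩⟩) (fun l => ‖βhat i - α l‖)
      ≤ n * d := by
    simpa using sum_le_card_nsmul univ _ d
      fun i _ => (inf'_le _ (mem_univ (g i))).trans (h i)
  calc kmedObj hK βhat α ≤ (n : ℝ)⁻¹ * (n * d) := by
        unfold kmedObj; gcongr
    _ = ((n : ℝ)⁻¹ * n) * d := by ring
    _ ≤ d := mul_le_of_le_one_left hd (inv_mul_le_one_of_le₀ le_rfl n.cast_nonneg)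

theorem card_div_mul_le_kmedObj (S : Finset (Fin n)) {d : ℝ}
    (h : ∀ i ∈ S, ∀ l, d ≤ ‖βhat i - α l‖) : (#S / n : ℝ) * d ≤ kmedObj hK βhat α := by
  have hsum : (#S : ℝ) * d
      ≤ ∑ i, univ.inf' (univ_nonempty_iff.mpr ⟨⟨0, hK⟩⟩) (fun l => ‖βhat i - α l‖) :=
    calc (#S : ℝ) * d = ∑ _i ∈ S, d := by rw [sum_const, nsmul_eq_mul]
      _ ≤ ∑ i ∈ S, univ.inf' _ (fun l => ‖βhat i - α l‖) :=
          sum_le_sum fun i hi => le_inf' _ _ fun l _ => h i hi l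
      _ ≤ _ := sum_le_sum_of_subset_of_nonneg (subset_univ S)
          fun i _ _ => le_inf' _ _ fun l _ => norm_nonneg _
  calc (#S / n : ℝ) * d = (n : ℝ)⁻¹ * (#S * d) := by ring
    _ ≤ kmedObj hK βhat α := by unfold kmedObj; gcongr

theorem exists_dist_le_of_kmedObj_lt (b : EuclideanSpace ℝ (Fin K)) (S : Finset (Fin n))
    {ε r : ℝ} (hS : ∀ i ∈ S, ‖βhat i - b‖ ≤ ε)
    (hlt : kmedObj hK βhat α < (#S / n : ℝ) * (r - ε)) : ∃ l, dist (α l) b ≤ r := by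
  by_contra! hfar
  have hcost : ∀ i ∈ S, ∀ l, r - ε ≤ ‖βhat i - α l‖ := by
    intro i hi l
    have := calc dist (α l) b ≤ dist (α l) (βhat i) + dist (βhat i) b := dist_triangle _ _ _
      _ ≤ ‖βhat i - α l‖ + ε := by
        rw [dist_comm, dist_eq_norm, dist_eq_norm]; linarith [hS i hi]
    linarith [hfar l]
  exact (card_div_mul_le_kmedObj hK βhat α S hcost).not_gt hlt

end KMedians

theorem stmt7_general (n K : ℕ) (hK : 0 < K)
    (c c₁ c₂ : ℝ) (hc : 0 < c) (hc1 : c ≤ 1) (hc₂ : 0 < c₂)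
    (β : Fin K → EuclideanSpace ℝ (Fin K)) (βhat : Fin n → EuclideanSpace ℝ (Fin K))
    (g : Fin n → Fin K)
    (hclose : ∀ i, ‖βhat i - β (g i)‖ ≤ c₂)
    (hsep : ∀ k k', k ≠ k' → c₁ ≤ ‖β k - β k'‖)
    (hπ : ∀ k, c / K ≤ ((Finset.univ.filter fun i => g i = k).card : ℝ) / n)
    (hcond : 15 * K * c₂ ≤ c * c₁)
    (αtil : Fin K → EuclideanSpace ℝ (Fin K))
    (hmin : ∀ α : Fin K → EuclideanSpace ℝ (Fin K),
      kmedObj hK βhat αtil ≤ kmedObj hK βhat α) :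
    Metric.hausdorffDist (Set.range αtil) (Set.range β) ≤ 3 * K * c₂ / c := by
  set r : ℝ := 3 * K * c₂ / c with hr
  have hK1 : (1 : ℝ) ≤ K := by exact_mod_cast hK
  have hcK : c / K ≤ 1 := div_le_one_of_le₀ (hc1.trans hK1) (by positivity)
  have hcKr : c / K * r = 3 * c₂ := by rw [hr]; field_simp
  have hQ : kmedObj hK βhat αtil ≤ c₂ :=
    (hmin β).trans (kmedObj_le_of_forall_norm_sub_le hK βhat β g hc₂.le hclose)
  -- `c / K * (r - c₂) = 3 c₂ - (c / K) c₂ ≥ 2 c₂`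
  have hcost : c₂ < c / K * (r - c₂) := by nlinarith
  apply hausdorffDist_range_le_of_forall_exists_dist_le (by positivity)
  · intro k k' hne
    refine lt_of_lt_of_le ?_ ((hsep k k' hne).trans_eq (dist_eq_norm _ _).symm)
    -- `2 r = 6 K c₂ / c < 15 K c₂ / c ≤ c₁`
    rw [hr, mul_div_assoc', div_lt_iff₀ hc]
    nlinarith [mul_pos (zero_lt_one.trans_le hK1) hc₂]
  · intro k
    refine exists_dist_le_of_kmedObj_lt hK βhat αtil (β k) {i | g i = k}
      (fun i hi => (mem_filter.mp hi).2 ▸ hclose i) ?_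
    have hr_sub : 0 ≤ r - c₂ := (pos_of_mul_pos_right (hc₂.trans hcost) (by positivity)).le
    calc kmedObj hK βhat αtil ≤ c₂ := hQ
      _ < c / K * (r - c₂) := hcost
      _ ≤ _ := mul_le_mul_of_nonneg_right (hπ k) hr_sub

/-- Modified K-means centroid consistency: the minimizer of the
unsquared objective is within Hausdorff distance `3Kc₂/c` of the true centroids. -/
theorem stmt7 (n K : ℕ) (hn : 0 < n) (hK : 0 < K)
    (c c₁ c₂ : ℝ) (hc : 0 < c) (hc1 : c ≤ 1) (hc₁ : 0 < c₁) (hc₂ : 0 < c₂)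
    (β : Fin K → EuclideanSpace ℝ (Fin K)) (βhat : Fin n → EuclideanSpace ℝ (Fin K))
    (g : Fin n → Fin K)
    (hclose : ∀ i, ‖βhat i - β (g i)‖ ≤ c₂)
    (hsep : ∀ k k', k ≠ k' → c₁ ≤ ‖β k - β k'‖)
    (hπ : ∀ k, c / K ≤ ((Finset.univ.filter fun i => g i = k).card : ℝ) / n)
    (hcond : 15 * K * c₂ ≤ c * c₁)
    (αtil : Fin K → EuclideanSpace ℝ (Fin K))
    (hmin : ∀ α : Fin K → EuclideanSpace ℝ (Fin K),
      kmedObj hK βhat αtil ≤ kmedObj hK βhat α) :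
    Metric.hausdorffDist (Set.range αtil) (Set.range β) ≤ 3 * K * c₂ / c :=
  stmt7_general n K hK c c₁ c₂ hc hc1 hc₂ β βhat g hclose hsep hπ hcond αtil hmin
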